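/- For all real a ≥ b > 0, all t ∈ ℝ, and the interior angles θ₁(t), θ₂(t), θ₃(t) of the triangle T(t) of the homothetic Poncelet family, the sum of cotangents satisfies cot θ₁(t) + cot θ₂(t) + cot θ₃(t) = √3·(a² + b²)/(2ab); in particular it is independent of t. -/

import Mathlib

open Real EuclideanGeometry

/-- A point of the Euclidean plane `ℝ²`. -/
noncomputable def pt (x y : ℝ) : EuclideanSpace ℝ (Fin 2) := WithLp.toLp 2 ![x, y]

/-- Vertex `k` of the triangle `T(t)` of the homothetic Poncelet family. -/
noncomputable def homP (a b t : ℝ) (k : ℕ) : EuclideanSpace ℝ (Fin 2) :=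
  pt (a * Real.cos (t + 2 * π * k / 3)) (b * Real.sin (t + 2 * π * k / 3))

/-!
At a vertex `A` of a plane triangle `ABC`, `cot A = ⟪AB, AC⟫ / |AB × AC|`, and the cross
product is, up to sign, twice the area whichever vertex it is taken at. Summing the three dot
products gives `cot A + cot B + cot C = (|AB|² + |BC|² + |CA|²) / (4 · area)`. The triangle
`T(t)` is the image under `diag(a, b)` of an equilateral triangle inscribed in the unit circle,
so the sum of its squared sides is `9(a² + b²)/2` and its area is `3√3ab/4`, both independent
of `t`.
-/

open scoped RealInnerProductSpace

namespace InnerProductGeometry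

variable {V : Type*} [NormedAddCommGroup V] [InnerProductSpace ℝ V]

-- When `x` and `y` are parallel, both sides are the junk value `_ / 0 = 0`.
theorem cot_angle (x y : V) :
    cot (angle x y) = ⟪x, y⟫ / √(⟪x, x⟫ * ⟪y, y⟫ - ⟪x, y⟫ * ⟪x, y⟫) := by
  rcases eq_or_ne x 0 with rfl | hx
  · simp [angle_zero_left, cot_eq_cos_div_sin]
  rcases eq_or_ne y 0 with rfl | hy
  · simp [angle_zero_right, cot_eq_cos_div_sin]
  have hxy : ‖x‖ * ‖y‖ ≠ 0 := by positivity
  rw [cot_eq_cos_div_sin, ← mul_div_mul_right _ _ hxy, cos_angle_mul_norm_mul_norm,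
    sin_angle_mul_norm_mul_norm]

end InnerProductGeometry

namespace EuclideanSpace

theorem inner_fin_two (u v : EuclideanSpace ℝ (Fin 2)) : ⟪u, v⟫ = u 0 * v 0 + u 1 * v 1 := by
  simp [PiLp.inner_apply, Fin.sum_univ_two, mul_comm]

theorem dist_sq_fin_two (x y : EuclideanSpace ℝ (Fin 2)) :
    dist x y ^ 2 = (x 0 - y 0) ^ 2 + (x 1 - y 1) ^ 2 := by
  simp [EuclideanSpace.dist_sq_eq, Fin.sum_univ_two, Real.dist_eq, sq_abs]

theorem cot_angle_fin_two (u v : EuclideanSpace ℝ (Fin 2)) :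
    cot (InnerProductGeometry.angle u v) = ⟪u, v⟫ / |u 0 * v 1 - u 1 * v 0| := by
  rw [InnerProductGeometry.cot_angle, inner_fin_two u u, inner_fin_two v v, inner_fin_two u v,
    ← sqrt_sq_eq_abs]
  congr 2
  ring

end EuclideanSpace

theorem EuclideanGeometry.cot_angle_add_cot_angle_add_cot_angle
    (A B C : EuclideanSpace ℝ (Fin 2)) :
    cot (∠ B A C) + cot (∠ A B C) + cot (∠ A C B) =
      (dist A B ^ 2 + dist B C ^ 2 + dist C A ^ 2) /
        (2 * |(B 0 - A 0) * (C 1 - A 1) - (B 1 - A 1) * (C 0 - A 0)|) := by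
  simp only [EuclideanGeometry.angle, EuclideanSpace.cot_angle_fin_two,
    EuclideanSpace.inner_fin_two, EuclideanSpace.dist_sq_fin_two, vsub_eq_sub, PiLp.sub_apply]
  set D := (B 0 - A 0) * (C 1 - A 1) - (B 1 - A 1) * (C 0 - A 0)
  have hB : (A 0 - B 0) * (C 1 - B 1) - (A 1 - B 1) * (C 0 - B 0) = -D := by ring
  have hC : (A 0 - C 0) * (B 1 - C 1) - (A 1 - C 1) * (B 0 - C 0) = D := by ring
  rw [hB, hC, abs_neg, ← add_div, ← add_div, mul_comm, ← div_div]
  congr 1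
  ring

theorem Real.cos_add_two_pi_div_three (t : ℝ) :
    cos (t + 2 * π / 3) = -(cos t / 2) - √3 / 2 * sin t := by
  rw [cos_add, show 2 * π / 3 = π - π / 3 by ring, cos_pi_sub, sin_pi_sub, cos_pi_div_three,
    sin_pi_div_three]
  ring

theorem Real.sin_add_two_pi_div_three (t : ℝ) :
    sin (t + 2 * π / 3) = -(sin t / 2) + √3 / 2 * cos t := by
  rw [sin_add, show 2 * π / 3 = π - π / 3 by ring, cos_pi_sub, sin_pi_sub, cos_pi_div_three,
    sin_pi_div_three]
  ring

@[simp] theorem pt_apply_zero (x y : ℝ) : pt x y 0 = x := rfl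

@[simp] theorem pt_apply_one (x y : ℝ) : pt x y 1 = y := rfl

section homP

variable (a b t : ℝ)

theorem homP_zero : homP a b t 0 = pt (a * cos t) (b * sin t) := by
  simp [homP]

theorem homP_one :
    homP a b t 1 =
      pt (a * (-(cos t / 2) - √3 / 2 * sin t)) (b * (-(sin t / 2) + √3 / 2 * cos t)) := by
  rw [homP, Nat.cast_one, mul_one, cos_add_two_pi_div_three, sin_add_two_pi_div_three]

theorem homP_two :
    homP a b t 2 =
      pt (a * (-(cos t / 2) + √3 / 2 * sin t)) (b * (-(sin t / 2) - √3 / 2 * cos t)) := by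
  rw [homP, Nat.cast_ofNat, show t + 2 * π * 2 / 3 = t + 2 * π / 3 + 2 * π / 3 by ring]
  simp only [cos_add_two_pi_div_three, sin_add_two_pi_div_three]
  have h3 : √3 ^ 2 = 3 := sq_sqrt (by norm_num)
  congr 2
  · linear_combination (-(cos t) / 4) * h3
  · linear_combination (-(sin t) / 4) * h3

theorem homP_dist_sq_sum :
    dist (homP a b t 0) (homP a b t 1) ^ 2 + dist (homP a b t 1) (homP a b t 2) ^ 2 +
      dist (homP a b t 2) (homP a b t 0) ^ 2 = 9 / 2 * (a ^ 2 + b ^ 2) := by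
  simp only [homP_zero, homP_one, homP_two, EuclideanSpace.dist_sq_fin_two, pt_apply_zero,
    pt_apply_one]
  linear_combination (9 / 2 * (a ^ 2 + b ^ 2)) * sin_sq_add_cos_sq t +
    (3 / 2 * (a ^ 2 * sin t ^ 2 + b ^ 2 * cos t ^ 2)) * sq_sqrt (show (0 : ℝ) ≤ 3 by norm_num)

theorem homP_cross :
    (homP a b t 1 0 - homP a b t 0 0) * (homP a b t 2 1 - homP a b t 0 1) -
      (homP a b t 1 1 - homP a b t 0 1) * (homP a b t 2 0 - homP a b t 0 0) =
        3 * √3 / 2 * (a * b) := by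
  simp only [homP_zero, homP_one, homP_two, pt_apply_zero, pt_apply_one]
  linear_combination (3 * √3 / 2 * (a * b)) * sin_sq_add_cos_sq t

end homP

/-- Over the homothetic Poncelet family, the sum of the cotangents of the interior
angles is `√3·(a² + b²)/(2ab)`, independently of `t`.  Here the interior angle at
vertex `A` of triangle `ABC` is the undirected angle `∠ B A C`. -/
theorem homothetic_sum_cot_invariant (a b : ℝ) (hab : a ≥ b) (hb : 0 < b) (t : ℝ) :
    Real.cot (∠ (homP a b t 1) (homP a b t 0) (homP a b t 2)) +
    Real.cot (∠ (homP a b t 0) (homP a b t 1) (homP a b t 2)) +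
    Real.cot (∠ (homP a b t 0) (homP a b t 2) (homP a b t 1)) =
      Real.sqrt 3 * (a ^ 2 + b ^ 2) / (2 * a * b) := by
  have ha : 0 < a := hb.trans_le hab
  rw [cot_angle_add_cot_angle_add_cot_angle, homP_dist_sq_sum, homP_cross,
    abs_of_pos (by positivity), div_eq_div_iff (by positivity) (by positivity)]
  linear_combination (-3 * a * b * (a ^ 2 + b ^ 2)) * sq_sqrt (show (0 : ℝ) ≤ 3 by norm_num)
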